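/- For the wave operator in ℝ^{1+n} with r < t, s² = t² − r², and real parameters α, β, the following decomposition holds for C² functions u: □u = (t−r)^{-β} t^{-α} ((s/t)²∂_t + (2x^a/t)∂̲_a)((t−r)^β t^α ∂_t u) + p_{n,α,β}(t,r) ∂_t u − Σ_a ∂̲_a ∂̲_a u, where ∂̲_a = (x^a/t)∂_t + ∂_a and p_{n,α,β}(t,r) = ((n−α) − (α+1)(r/t)² − β(t−r)/t) t^{-1}. -/

import Mathlib

noncomputable section

/-- Partial derivative in the `i`-th coordinate direction on `ℝ^m`. -/
def pd {m : ℕ} (u : (Fin m → ℝ) → ℝ) (i : Fin m) (x : Fin m → ℝ) : ℝ :=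
  fderiv ℝ u x (Pi.single i 1)

/-- `r = |x|` on `ℝ^{1+n}` (index `0` is time). -/
def rfun {n : ℕ} (p : Fin (n + 1) → ℝ) : ℝ :=
  Real.sqrt (∑ a : Fin n, (p a.succ) ^ 2)

/-- Hyperbolic derivative `∂̲_a = (x^a/t)∂_t + ∂_a`. -/
def Da {n : ℕ} (a : Fin n) (f : (Fin (n + 1) → ℝ) → ℝ) (p : Fin (n + 1) → ℝ) : ℝ :=
  (p a.succ / p 0) * pd f 0 p + pd f a.succ p

/-- D'Alembert operator on `ℝ^{1+n}`. -/
def Box {n : ℕ} (u : (Fin (n + 1) → ℝ) → ℝ) (p : Fin (n + 1) → ℝ) : ℝ :=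
  pd (pd u 0) 0 p - ∑ a : Fin n, pd (pd u a.succ) a.succ p

/-!
Write `w = (t - r)^β t^α` and `L = (s/t)² ∂_t + (2x^a/t) ∂̲_a`. Since `L` is a derivation,
`w⁻¹ L (w ∂_t u) = L ∂_t u + (L w / w) ∂_t u`, and `L t = (t² + r²)/t²`, `L r = 2r/t` give
`L w / w = (α (t² + r²)/t + β (t - r))/t²`; this accounts for the dependence of `p_{n,α,β}` on
`α, β`. What remains is the case `α = β = 0`. There `∂̲_a` and `L` are derivatives along the
vectors `v_a = (x^a/t) e₀ + e_a` and `V = ((t² + r²)/t²) e₀ + (2x^a/t) e_a`, so the second-order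
part is the identity `H(V, e₀) - Σ H(v_a, v_a) = H(e₀, e₀) - Σ H(e_a, e_a)` for the symmetric
Hessian `H` of `u`, and the first-order terms of `∂̲_a ∂̲_a u` add up to `((n - (r/t)²)/t) ∂_t u`.
-/

open Finset

section Coordinates

variable {m : ℕ}

lemma differentiableAt_pd {u : (Fin m → ℝ) → ℝ} {x : Fin m → ℝ}
    (hu : DifferentiableAt ℝ (fderiv ℝ u) x) (i : Fin m) : DifferentiableAt ℝ (pd u i) x :=
  hu.clm_apply (differentiableAt_const _)

lemma fderiv_pd_apply {u : (Fin m → ℝ) → ℝ} {x : Fin m → ℝ}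
    (hu : DifferentiableAt ℝ (fderiv ℝ u) x) (i : Fin m) (v : Fin m → ℝ) :
    fderiv ℝ (pd u i) x v = fderiv ℝ (fderiv ℝ u) x v (Pi.single i 1) := by
  have h := hu.hasFDerivAt.clm_apply (hasFDerivAt_const (Pi.single i (1 : ℝ)) x)
  rw [show pd u i = fun y => fderiv ℝ u y (Pi.single i 1) from rfl, h.fderiv]
  simp

lemma pd_pd {u : (Fin m → ℝ) → ℝ} {x : Fin m → ℝ}
    (hu : DifferentiableAt ℝ (fderiv ℝ u) x) (i j : Fin m) :
    pd (pd u i) j x = fderiv ℝ (fderiv ℝ u) x (Pi.single j 1) (Pi.single i 1) :=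
  fderiv_pd_apply hu i _

lemma fderiv_coord_div_coord_apply {x : Fin m → ℝ} (i j : Fin m) (hx : x j ≠ 0)
    (v : Fin m → ℝ) :
    fderiv ℝ (fun y : Fin m → ℝ => y i / y j) x v = v i / x j - x i * v j / x j ^ 2 := by
  have h : HasFDerivAt (fun y : Fin m → ℝ => y i * (y j)⁻¹) _ x :=
    (hasFDerivAt_apply i x).mul
      ((hasDerivAt_inv hx).comp_hasFDerivAt x (hasFDerivAt_apply (𝕜 := ℝ) j x))
  simp only [div_eq_mul_inv]
  rw [h.fderiv]
  simp only [neg_smul, smul_neg, add_apply, neg_apply, smul_apply, ContinuousLinearMap.proj_apply,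
    smul_eq_mul]
  ring

end Coordinates

section Minkowski

variable {n : ℕ}

lemma rfun_sq (p : Fin (n + 1) → ℝ) : rfun p ^ 2 = ∑ a : Fin n, p a.succ ^ 2 :=
  Real.sq_sqrt (sum_nonneg fun _ _ => sq_nonneg _)

lemma hasFDerivAt_rfun {p : Fin (n + 1) → ℝ} (hp : 0 < rfun p) :
    HasFDerivAt rfun ((rfun p)⁻¹ • ∑ a : Fin n,
      p a.succ • (ContinuousLinearMap.proj a.succ : (Fin (n + 1) → ℝ) →L[ℝ] ℝ)) p := by
  have hsum := HasFDerivAt.fun_sum (u := univ) fun a _ =>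
    (hasFDerivAt_apply (𝕜 := ℝ) (a : Fin n).succ p).pow 2
  have hsqrt : HasFDerivAt rfun _ p := hsum.sqrt (Real.sqrt_pos.mp hp).ne'
  refine hsqrt.congr_fderiv ?_
  ext v
  simp [rfun, mul_assoc, Finset.mul_sum]

lemma differentiableAt_rfun {p : Fin (n + 1) → ℝ} (hp : 0 < rfun p) :
    DifferentiableAt ℝ rfun p :=
  (hasFDerivAt_rfun hp).differentiableAt

lemma fderiv_rfun_apply {p : Fin (n + 1) → ℝ} (hp : 0 < rfun p) (v : Fin (n + 1) → ℝ) :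
    fderiv ℝ rfun p v = (∑ a : Fin n, p a.succ * v a.succ) / rfun p := by
  rw [(hasFDerivAt_rfun hp).fderiv]
  simp [div_eq_inv_mul]

def hypVec (a : Fin n) (p : Fin (n + 1) → ℝ) : Fin (n + 1) → ℝ :=
  (p a.succ / p 0) • Pi.single 0 1 + Pi.single a.succ 1

-- The paper's `(s/t)² ∂_t + (2x^a/t) ∂̲_a`.
def waveL (f : (Fin (n + 1) → ℝ) → ℝ) (p : Fin (n + 1) → ℝ) : ℝ :=
  ((p 0 ^ 2 - rfun p ^ 2) / p 0 ^ 2) * pd f 0 p +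
    ∑ a : Fin n, (2 * p a.succ / p 0) * Da a f p

def waveLVec (p : Fin (n + 1) → ℝ) : Fin (n + 1) → ℝ :=
  ((p 0 ^ 2 - rfun p ^ 2) / p 0 ^ 2) • Pi.single 0 1 +
    ∑ a : Fin n, (2 * p a.succ / p 0) • hypVec a p

lemma Da_eq_fderiv (a : Fin n) (f : (Fin (n + 1) → ℝ) → ℝ) (p : Fin (n + 1) → ℝ) :
    Da a f p = fderiv ℝ f p (hypVec a p) := by
  simp [Da, pd, hypVec]

lemma waveL_eq_fderiv (f : (Fin (n + 1) → ℝ) → ℝ) (p : Fin (n + 1) → ℝ) :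
    waveL f p = fderiv ℝ f p (waveLVec p) := by
  simp [waveL, waveLVec, pd, Da_eq_fderiv]

lemma hypVec_zero (a : Fin n) (p : Fin (n + 1) → ℝ) : hypVec a p 0 = p a.succ / p 0 := by
  simp [hypVec]

lemma hypVec_succ (a b : Fin n) (p : Fin (n + 1) → ℝ) :
    hypVec a p b.succ = if b = a then 1 else 0 := by
  simp [hypVec, Pi.single_apply]

lemma waveLVec_zero (p : Fin (n + 1) → ℝ) :
    waveLVec p 0 = (p 0 ^ 2 + rfun p ^ 2) / p 0 ^ 2 := by
  simp only [waveLVec, Pi.add_apply, Pi.smul_apply, Finset.sum_apply, hypVec_zero, smul_eq_mul,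
    Pi.single_eq_same]
  have hsum :
      ∑ a : Fin n, 2 * p a.succ / p 0 * (p a.succ / p 0) = 2 * rfun p ^ 2 / p 0 ^ 2 := by
    rw [rfun_sq, mul_sum, sum_div]
    exact sum_congr rfl fun a _ => by ring
  rw [hsum]
  ring

lemma waveLVec_succ (b : Fin n) (p : Fin (n + 1) → ℝ) :
    waveLVec p b.succ = 2 * p b.succ / p 0 := by
  simp [waveLVec, hypVec_succ]

lemma waveL_mul {f g : (Fin (n + 1) → ℝ) → ℝ} {p : Fin (n + 1) → ℝ}
    (hf : DifferentiableAt ℝ f p) (hg : DifferentiableAt ℝ g p) :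
    waveL (fun q => f q * g q) p = f p * waveL g p + g p * waveL f p := by
  simp [waveL_eq_fderiv, fderiv_fun_mul hf hg]

lemma fderiv_rfun_waveLVec {p : Fin (n + 1) → ℝ} (hp : 0 < rfun p) :
    fderiv ℝ rfun p (waveLVec p) = 2 * rfun p / p 0 := by
  rw [fderiv_rfun_apply hp]
  have hsum : ∑ a : Fin n, p a.succ * (2 * p a.succ / p 0) = 2 * rfun p ^ 2 / p 0 := by
    rw [rfun_sq, mul_sum, sum_div]
    exact sum_congr rfl fun a _ => by ring
  simp only [waveLVec_succ, hsum]
  field_simp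

lemma hessian_waveLVec_sub_sum_hypVec
    (H : (Fin (n + 1) → ℝ) →L[ℝ] (Fin (n + 1) → ℝ) →L[ℝ] ℝ) (hH : ∀ v w, H v w = H w v)
    {p : Fin (n + 1) → ℝ} (hp : p 0 ≠ 0) :
    H (waveLVec p) (Pi.single 0 1) - ∑ a : Fin n, H (hypVec a p) (hypVec a p) =
      H (Pi.single 0 1) (Pi.single 0 1) -
        ∑ a : Fin n, H (Pi.single a.succ 1) (Pi.single a.succ 1) := by
  have hsymm : ∀ a : Fin n, H (Pi.single 0 1) (Pi.single a.succ 1) =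
      H (Pi.single a.succ 1) (Pi.single 0 1) := fun a => hH _ _
  simp only [waveLVec, hypVec, map_add, map_smul, map_sum, add_apply,
    smul_apply, FunLike.coe_sum, Finset.sum_apply, smul_eq_mul, hsymm]
  have hr : ∑ a : Fin n, (p a.succ / p 0) ^ 2 * H (Pi.single 0 1) (Pi.single 0 1) =
      rfun p ^ 2 / p 0 ^ 2 * H (Pi.single 0 1) (Pi.single 0 1) := by
    simp only [← sum_mul, div_pow, ← sum_div, rfun_sq]
  calc _ = (p 0 ^ 2 - rfun p ^ 2) / p 0 ^ 2 * H (Pi.single 0 1) (Pi.single 0 1) +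
        ∑ a : Fin n, ((p a.succ / p 0) ^ 2 * H (Pi.single 0 1) (Pi.single 0 1) -
          H (Pi.single a.succ 1) (Pi.single a.succ 1)) := by
        rw [add_sub_assoc, ← sum_sub_distrib]
        exact congrArg _ (sum_congr rfl fun a _ => by ring)
    _ = _ := by
      rw [sum_sub_distrib, hr]
      field_simp
      ring

lemma Da_Da_apply {u : (Fin (n + 1) → ℝ) → ℝ} {p : Fin (n + 1) → ℝ}
    (hu : DifferentiableAt ℝ (fderiv ℝ u) p) (hp : p 0 ≠ 0) (a : Fin n) :
    Da a (Da a u) p = fderiv ℝ (fderiv ℝ u) p (hypVec a p) (hypVec a p) +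
      (1 - (p a.succ / p 0) ^ 2) / p 0 * pd u 0 p := by
  have hratio : DifferentiableAt ℝ (fun q : Fin (n + 1) → ℝ => q a.succ / q 0) p := by
    fun_prop (disch := exact hp)
  have hprod : DifferentiableAt ℝ (fun q => q a.succ / q 0 * pd u 0 q) p :=
    hratio.mul (differentiableAt_pd hu 0)
  have hsplit : ∀ w, fderiv ℝ (fderiv ℝ u) p w (hypVec a p) =
      p a.succ / p 0 * fderiv ℝ (fderiv ℝ u) p w (Pi.single 0 1) +
        fderiv ℝ (fderiv ℝ u) p w (Pi.single a.succ 1) := fun w => by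
    simp [hypVec]
  rw [Da_eq_fderiv, show Da a u = fun q => q a.succ / q 0 * pd u 0 q + pd u a.succ q from rfl,
    fderiv_fun_add hprod (differentiableAt_pd hu _),
    fderiv_fun_mul hratio (differentiableAt_pd hu 0)]
  simp only [add_apply, smul_apply, smul_eq_mul, fderiv_pd_apply hu,
    fderiv_coord_div_coord_apply _ _ hp, hypVec_zero, hypVec_succ, hsplit, if_true]
  ring

theorem Box_eq_waveL_add {u : (Fin (n + 1) → ℝ) → ℝ} (hu : ContDiff ℝ 2 u)
    {p : Fin (n + 1) → ℝ} (hp : p 0 ≠ 0) :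
    Box u p = waveL (pd u 0) p + ((n - (rfun p / p 0) ^ 2) / p 0) * pd u 0 p -
      ∑ a : Fin n, Da a (Da a u) p := by
  have hdu : DifferentiableAt ℝ (fderiv ℝ u) p :=
    (hu.fderiv_right (m := 1) le_rfl).differentiable one_ne_zero p
  have hsymm : IsSymmSndFDerivAt ℝ u p := hu.contDiffAt.isSymmSndFDerivAt (by simp)
  have hsum :
      ∑ a : Fin n, (1 - (p a.succ / p 0) ^ 2) / p 0 = (n - (rfun p / p 0) ^ 2) / p 0 := by
    simp only [← sum_div, sum_sub_distrib, div_pow, sum_const, card_univ, Fintype.card_fin,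
      nsmul_eq_mul, mul_one, rfun_sq]
  rw [Box, pd_pd hdu, waveL_eq_fderiv, fderiv_pd_apply hdu]
  simp only [pd_pd hdu, Da_Da_apply hdu hp, sum_add_distrib, ← sum_mul, hsum]
  have := hessian_waveLVec_sub_sum_hypVec _ hsymm hp
  linear_combination -this

def weight (α β : ℝ) (q : Fin (n + 1) → ℝ) : ℝ := (q 0 - rfun q) ^ β * q 0 ^ α

lemma differentiableAt_weight (α β : ℝ) {p : Fin (n + 1) → ℝ} (h0 : 0 < rfun p)
    (hp : rfun p < p 0) : DifferentiableAt ℝ (weight α β) p :=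
  (((differentiableAt_apply 0 p).sub (differentiableAt_rfun h0)).rpow_const
    (Or.inl (sub_pos.mpr hp).ne')).mul
    ((differentiableAt_apply 0 p).rpow_const (Or.inl (h0.trans hp).ne'))

lemma waveL_weight (α β : ℝ) {p : Fin (n + 1) → ℝ} (h0 : 0 < rfun p) (hp : rfun p < p 0) :
    waveL (weight α β) p =
      weight α β p * ((α * (p 0 ^ 2 + rfun p ^ 2) / p 0 + β * (p 0 - rfun p)) / p 0 ^ 2) := by
  have ht : 0 < p 0 := h0.trans hp
  have htr : 0 < p 0 - rfun p := sub_pos.mpr hp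
  have h1 := ((hasFDerivAt_apply (𝕜 := ℝ) 0 p).sub
    (differentiableAt_rfun h0).hasFDerivAt).rpow_const (p := β) (Or.inl htr.ne')
  have h2 := (hasFDerivAt_apply (𝕜 := ℝ) 0 p).rpow_const (p := α) (Or.inl ht.ne')
  have hw : HasFDerivAt (weight α β) _ p := h1.mul h2
  rw [waveL_eq_fderiv, hw.fderiv]
  simp only [weight, Pi.sub_apply, add_apply, sub_apply, smul_apply, smul_eq_mul,
    ContinuousLinearMap.proj_apply, waveLVec_zero, fderiv_rfun_waveLVec h0,
    Real.rpow_sub_one ht.ne', Real.rpow_sub_one htr.ne']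
  field_simp
  ring

end Minkowski

theorem weighted_wave_decomposition_general
    (n : ℕ) (α β : ℝ)
    (u : (Fin (n + 1) → ℝ) → ℝ) (hu : ContDiff ℝ 2 u)
    (p : Fin (n + 1) → ℝ) (h0 : 0 < rfun p) (hp : rfun p < p 0) :
    Box u p =
      (p 0 - rfun p) ^ (-β) * (p 0) ^ (-α) *
          (((p 0 ^ 2 - rfun p ^ 2) / p 0 ^ 2) *
              pd (fun q => (q 0 - rfun q) ^ β * (q 0) ^ α * pd u 0 q) 0 p +
            ∑ a : Fin n, (2 * p a.succ / p 0) *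
              Da a (fun q => (q 0 - rfun q) ^ β * (q 0) ^ α * pd u 0 q) p) +
        ((((n : ℝ) - α) - (α + 1) * (rfun p / p 0) ^ 2 -
            β * (p 0 - rfun p) / p 0) / p 0) * pd u 0 p -
        ∑ a : Fin n, Da a (Da a u) p := by
  have ht : 0 < p 0 := h0.trans hp
  have htr : 0 < p 0 - rfun p := sub_pos.mpr hp
  have hdu : DifferentiableAt ℝ (fderiv ℝ u) p :=
    (hu.fderiv_right (m := 1) le_rfl).differentiable one_ne_zero p
  change Box u p = (p 0 - rfun p) ^ (-β) * p 0 ^ (-α) *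
      waveL (fun q => weight α β q * pd u 0 q) p + _ - _
  rw [waveL_mul (differentiableAt_weight α β h0 hp) (differentiableAt_pd hdu 0),
    waveL_weight α β h0 hp, Box_eq_waveL_add hu ht.ne', Real.rpow_neg htr.le, Real.rpow_neg ht.le]
  have hw1 := Real.rpow_pos_of_pos htr β
  have hw2 := Real.rpow_pos_of_pos ht α
  simp only [weight]
  field_simp
  ring

/-- weighted decomposition of the wave operator in `{0 < r < t}`:
`□u = (t−r)^{-β}t^{-α}((s/t)²∂_t + (2x^a/t)∂̲_a)((t−r)^β t^α ∂_t u)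
  + p_{n,α,β}(t,r)∂_t u − Σ_a ∂̲_a∂̲_a u`. -/
theorem weighted_wave_decomposition
    (n : ℕ) (hn : 1 ≤ n) (α β : ℝ)
    (u : (Fin (n + 1) → ℝ) → ℝ) (hu : ContDiff ℝ 2 u)
    (p : Fin (n + 1) → ℝ) (h0 : 0 < rfun p) (hp : rfun p < p 0) :
    Box u p =
      (p 0 - rfun p) ^ (-β) * (p 0) ^ (-α) *
          (((p 0 ^ 2 - rfun p ^ 2) / p 0 ^ 2) *
              pd (fun q => (q 0 - rfun q) ^ β * (q 0) ^ α * pd u 0 q) 0 p +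
            ∑ a : Fin n, (2 * p a.succ / p 0) *
              Da a (fun q => (q 0 - rfun q) ^ β * (q 0) ^ α * pd u 0 q) p) +
        ((((n : ℝ) - α) - (α + 1) * (rfun p / p 0) ^ 2 -
            β * (p 0 - rfun p) / p 0) / p 0) * pd u 0 p -
        ∑ a : Fin n, Da a (Da a u) p :=
  weighted_wave_decomposition_general n α β u hu p h0 hp
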